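/- arXiv:1212.1535 — 2 statements merged into one kernel-verified Lean document; each statement's English description precedes it below -/
import Mathlib

section
/- Let 𝔸 and 𝔹 be order k ≥ 2 tensors of dimensions n and m with 𝔸u = λ u^{[k-1]} and 𝔹v = μ v^{[k-1]}, and let w = u ⊗ v ∈ ℂ^{nm}. Then (𝔸 ⊗ I_m + I_n ⊗ 𝔹)w = (λ + μ) w^{[k-1]}. -/
open scoped BigOperators

noncomputable section

/-- An "order (1 + |α|)" tensor of dimension `|I|` over `R`: entries indexed by a
head index in `I` and a tail of indices `α → I`. -/
abbrev Tensor (R I α : Type) : Type := I → (α → I) → R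

/-- The general tensor product: `(A*B)_{i α₁ ⋯ α_m} = ∑ a_{i i₂ ⋯} ∏ b_{i_j α_j}`. -/
def tmul {R I α β : Type} [CommSemiring R] [Fintype I] [DecidableEq α] [Fintype α]
    (A : Tensor R I α) (B : Tensor R I β) : Tensor R I (α × β) :=
  fun i f => ∑ t : α → I, A i t * ∏ j : α, B (t j) (fun b => f (j, b))

/-- The general tensor product of a tensor with a vector (an order-1 tensor). -/
def tapp {R I α : Type} [CommSemiring R] [Fintype I] [DecidableEq α] [Fintype α]
    (A : Tensor R I α) (x : I → R) : I → R :=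
  fun i => ∑ t : α → I, A i t * ∏ j : α, x (t j)

/-- The general tensor product `P * A` where `P` is a matrix (an order-2 tensor). -/
def matMulT {R I α : Type} [CommSemiring R] [Fintype I]
    (P : Matrix I I R) (A : Tensor R I α) : Tensor R I α :=
  fun i f => ∑ j : I, P i j * A j f

/-- The general tensor product `A * Q` where `Q` is a matrix (an order-2 tensor). -/
def tMulMat {R I α : Type} [CommSemiring R] [Fintype I] [DecidableEq α] [Fintype α]
    (A : Tensor R I α) (Q : Matrix I I R) : Tensor R I α :=
  fun i f => ∑ t : α → I, A i t * ∏ j : α, Q (t j) (f j)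

/-- The unit tensor `𝕀`: entries `1` exactly on the diagonal. -/
def unitT (R I α : Type) [CommSemiring R] [DecidableEq I] [Fintype α] [DecidableEq α] :
    Tensor R I α :=
  fun i f => if ∀ j, f j = i then 1 else 0

/-- The direct product of two tensors of the same order. -/
def dprod {R I J α : Type} [CommSemiring R]
    (A : Tensor R I α) (B : Tensor R J α) : Tensor R (I × J) α :=
  fun p f => A p.1 (fun j => (f j).1) * B p.2 (fun j => (f j).2)

end

section TensorApplication

variable {R I J α : Type} [CommSemiring R] [Fintype I] [Fintype J] [Fintype α] [DecidableEq α]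

theorem tapp_add (A B : Tensor R I α) (x : I → R) :
    tapp (A + B) x = tapp A x + tapp B x := by
  funext i
  simp only [tapp, Pi.add_apply, add_mul, Finset.sum_add_distrib]

theorem tapp_unitT [DecidableEq I] (x : I → R) :
    tapp (unitT R I α) x = fun i => x i ^ Fintype.card α := by
  funext i
  rw [tapp, Finset.sum_eq_single (fun _ => i)]
  · simp [unitT]
  · intro t _ ht
    have : ¬ ∀ j, t j = i := fun h => ht (funext h)
    simp [unitT, this]
  · simp

theorem tapp_dprod (A : Tensor R I α) (B : Tensor R J α) (x : I → R) (y : J → R) :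
    tapp (dprod A B) (fun p => x p.1 * y p.2) = fun p => tapp A x p.1 * tapp B y p.2 := by
  funext p
  rw [tapp, tapp, tapp, Fintype.sum_mul_sum, ← Fintype.sum_prod_type',
    ← (Equiv.arrowProdEquivProdArrow α (fun _ => I) (fun _ => J)).sum_comp]
  refine Fintype.sum_congr _ _ fun t => ?_
  simp only [dprod, Equiv.arrowProdEquivProdArrow, Equiv.coe_fn_mk, Finset.prod_mul_distrib]
  ring

end TensorApplication

theorem dprod_sum_eigen_general (n m k : ℕ)
    (A : Tensor ℂ (Fin n) (Fin k)) (B : Tensor ℂ (Fin m) (Fin k))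
    (lam mu : ℂ) (u : Fin n → ℂ) (v : Fin m → ℂ)
    (hu : tapp A u = fun i => lam * u i ^ k)
    (hv : tapp B v = fun j => mu * v j ^ k) :
    tapp (dprod A (unitT ℂ (Fin m) (Fin k)) + dprod (unitT ℂ (Fin n) (Fin k)) B)
        (fun p => u p.1 * v p.2) =
      fun p => (lam + mu) * (u p.1 * v p.2) ^ k := by
  rw [tapp_add, tapp_dprod, tapp_dprod, tapp_unitT, tapp_unitT, hu, hv, Fintype.card_fin]
  funext p
  simp only [Pi.add_apply]
  ring

/-- if `𝔸u = λ u^{[k]}` and `𝔹v = μ v^{[k]}` (tensors of order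
`k + 1 ≥ 2`), then `w = u ⊗ v` satisfies `(𝔸 ⊗ I_m + I_n ⊗ 𝔹) w = (λ + μ) w^{[k]}`. -/
theorem dprod_sum_eigen (n m k : ℕ) (hk : 1 ≤ k)
    (A : Tensor ℂ (Fin n) (Fin k)) (B : Tensor ℂ (Fin m) (Fin k))
    (lam mu : ℂ) (u : Fin n → ℂ) (v : Fin m → ℂ)
    (hu : tapp A u = fun i => lam * u i ^ k)
    (hv : tapp B v = fun j => mu * v j ^ k) :
    tapp (dprod A (unitT ℂ (Fin m) (Fin k)) + dprod (unitT ℂ (Fin n) (Fin k)) B)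
        (fun p => u p.1 * v p.2) =
      fun p => (lam + mu) * (u p.1 * v p.2) ^ k :=
  dprod_sum_eigen_general n m k A B lam mu u v hu hv
end

section
/- Every nonnegative primitive tensor 𝔸 of order m ≥ 2 and dimension n has primitive degree at most 2^{n^m}: there exists r ≤ 2^{n^m} such that 𝔸^r is essentially positive. -/
open scoped BigOperators

noncomputable section

/-- Tail index type of the `r+1`-st power (under the general tensor product) of a
tensor with tail `Fin m`. -/
def PowIdx (m : ℕ) : ℕ → Type
  | 0 => Fin m
  | r + 1 => Fin m × PowIdx m r

def powIdxFintype (m : ℕ) : (r : ℕ) → Fintype (PowIdx m r)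
  | 0 => inferInstanceAs (Fintype (Fin m))
  | r + 1 => letI := powIdxFintype m r; inferInstanceAs (Fintype (Fin m × PowIdx m r))

def powIdxDecEq (m : ℕ) : (r : ℕ) → DecidableEq (PowIdx m r)
  | 0 => inferInstanceAs (DecidableEq (Fin m))
  | r + 1 => letI := powIdxDecEq m r; inferInstanceAs (DecidableEq (Fin m × PowIdx m r))

instance (m r : ℕ) : Fintype (PowIdx m r) := powIdxFintype m r
instance (m r : ℕ) : DecidableEq (PowIdx m r) := powIdxDecEq m r

/-- `tpow A r` is the power `𝔸^{r+1}` of `𝔸` under the general tensor product. -/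
def tpow {R : Type} [CommSemiring R] {n m : ℕ} (A : Tensor R (Fin n) (Fin m)) :
    (r : ℕ) → Tensor R (Fin n) (PowIdx m r)
  | 0 => A
  | r + 1 => tmul A (tpow A r)

/-- A real tensor `𝔹` is essentially positive if `𝔹x > 0` entrywise for every
nonzero nonnegative vector `x`. -/
def EssPos {n : ℕ} {α : Type} [DecidableEq α] [Fintype α]
    (B : Tensor ℝ (Fin n) α) : Prop :=
  ∀ x : Fin n → ℝ, (∀ i, 0 ≤ x i) → x ≠ 0 → ∀ i, 0 < tapp B x i

end

/-! Only the zero pattern of a nonnegative vector matters: the support of `𝔸x` is obtained from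
the support of `x` by a monotone map `φ` on subsets of the index set, so `𝔸^{r+1}` is essentially
positive iff `φ^{r+1}` sends every nonempty subset to the full set. Primitivity makes the full set
a fixed point of `φ` that every nonempty orbit reaches, and an orbit in the `2^n` subsets that
reaches a fixed point does so within `2^n - 1` steps. -/

open Function Finset

lemma tapp_tmul {R I α β : Type} [CommSemiring R] [Fintype I] [DecidableEq α] [Fintype α]
    [DecidableEq β] [Fintype β] (A : Tensor R I α) (B : Tensor R I β) (x : I → R) :
    tapp (tmul A B) x = tapp A (tapp B x) := by
  funext i
  -- A tail `α × β → I` of `A * B` is a curried family of tails `α → β → I` of `B`.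
  have curry : ∑ f : α × β → I, (∑ t : α → I, A i t * ∏ j, B (t j) fun b => f (j, b)) *
        ∏ p, x (f p)
      = ∑ h : α → β → I, (∑ t : α → I, A i t * ∏ j, B (t j) (h j)) *
        ∏ j, ∏ b, x (h j b) :=
    Fintype.sum_equiv (Equiv.curry α β I) _ _ fun f => by rw [Fintype.prod_prod_type]; rfl
  simp only [tapp, tmul]
  rw [curry]
  simp only [prod_univ_sum, Fintype.piFinset_univ, mul_sum, sum_mul, prod_mul_distrib, mul_assoc]
  exact sum_comm

section Support

variable {R I α : Type} [CommSemiring R]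

def supportStep (A : Tensor R I α) (S : Set I) : Set I :=
  {i | ∃ t : α → I, A i t ≠ 0 ∧ ∀ j, t j ∈ S}

lemma supportStep_mono (A : Tensor R I α) : Monotone (supportStep A) :=
  fun _ _ hST _ ⟨t, hAt, ht⟩ => ⟨t, hAt, fun j => hST (ht j)⟩

variable [PartialOrder R] [IsOrderedRing R] [Fintype I] [DecidableEq α] [Fintype α]

lemma tapp_nonneg {A : Tensor R I α} {x : I → R} (hA : 0 ≤ A) (hx : 0 ≤ x) :
    0 ≤ tapp A x :=
  fun i => sum_nonneg fun t _ => mul_nonneg (hA i t) (prod_nonneg fun j _ => hx (t j))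

lemma support_tapp [Nontrivial R] [NoZeroDivisors R] {A : Tensor R I α} {x : I → R} (hA : 0 ≤ A)
    (hx : 0 ≤ x) : support (tapp A x) = supportStep A (support x) := by
  ext i
  rw [mem_support, tapp, Ne, sum_eq_zero_iff_of_nonneg fun t _ =>
    mul_nonneg (hA i t) (prod_nonneg fun j _ => hx (t j))]
  simp [supportStep, prod_eq_zero_iff]

lemma support_iterate_tapp [Nontrivial R] [NoZeroDivisors R] {A : Tensor R I α} {x : I → R}
    (hA : 0 ≤ A) (hx : 0 ≤ x) (k : ℕ) :
    support ((tapp A)^[k] x) = (supportStep A)^[k] (support x) := by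
  induction k generalizing x with
  | zero => rfl
  | succ k ih => rw [iterate_succ_apply, iterate_succ_apply, ih (tapp_nonneg hA hx),
      support_tapp hA hx]

end Support

lemma iterate_eq_of_isFixedPt_of_card_sub_one_le {β : Type} [Fintype β] {f : β → β} {u x : β}
    (hu : IsFixedPt f u) (hx : ∃ k, f^[k] x = u) {l : ℕ} (hl : Fintype.card β - 1 ≤ l) :
    f^[l] x = u := by
  classical
  set k := Nat.find hx
  have hk : f^[k] x = u := Nat.find_spec hx
  -- A repetition in the orbit before its first visit to `u` would yield an earlier visit.
  have hinj : Injective fun i : Fin (k + 1) => f^[i] x := by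
    intro a b (hab : f^[a] x = f^[b] x)
    by_contra hne
    wlog hlt : (a : ℕ) < b generalizing a b
    · exact this hab.symm (Ne.symm hne) (by omega)
    have hearly : f^[k - b + a] x = u := by
      rw [iterate_add_apply, hab, ← iterate_add_apply, Nat.sub_add_cancel (by omega), hk]
    exact Nat.find_min hx (by omega) hearly
  have hkcard : k + 1 ≤ Fintype.card β := by simpa using Fintype.card_le_of_injective _ hinj
  calc f^[l] x = f^[l - k] (f^[k] x) := by rw [← iterate_add_apply, Nat.sub_add_cancel (by omega)]
    _ = u := by rw [hk, (hu.iterate _).eq]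

section Powers

variable {n m : ℕ}

lemma tapp_tpow {R : Type} [CommSemiring R] (A : Tensor R (Fin n) (Fin m)) (r : ℕ) :
    tapp (tpow A r) = (tapp A)^[r + 1] := by
  funext x
  induction r with
  | zero => rfl
  | succ r ih => rw [iterate_succ_apply', ← ih]; exact tapp_tmul A (tpow A r) x

lemma essPos_tpow_iff {A : Tensor ℝ (Fin n) (Fin m)} (hA : 0 ≤ A) (r : ℕ) :
    EssPos (tpow A r) ↔ ∀ S : Set (Fin n), S.Nonempty → (supportStep A)^[r + 1] S = Set.univ := by
  have hsupp {x : Fin n → ℝ} (hx : 0 ≤ x) :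
      support (tapp (tpow A r) x) = (supportStep A)^[r + 1] (support x) := by
    rw [tapp_tpow, support_iterate_tapp hA hx]
  constructor
  · intro hpos S hS
    set x := S.indicator (1 : Fin n → ℝ)
    have hx : 0 ≤ x := Set.indicator_nonneg fun _ _ => zero_le_one
    have hxS : support x = S := by simp [x, Set.support_indicator]
    have hx0 : x ≠ 0 := by rwa [← support_nonempty_iff, hxS]
    rw [← hxS, ← hsupp hx]
    exact Set.eq_univ_of_forall fun i => (hpos _ hx hx0 i).ne'
  · intro h x hx hx0 i
    have hnonneg : 0 ≤ tapp (tpow A r) x := by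
      rw [tapp_tpow]
      exact Iterate.rec (fun y => 0 ≤ y) hx (fun _ hy => tapp_nonneg hA hy) (r + 1)
    have hi : i ∈ support (tapp (tpow A r) x) := by
      rw [hsupp hx, h _ (support_nonempty_iff.2 hx0)]
      trivial
    exact (hnonneg i).lt_of_ne' hi

end Powers

theorem primitive_degree_bound_general (n m : ℕ)
    (A : Tensor ℝ (Fin n) (Fin m)) (hA : ∀ i f, 0 ≤ A i f)
    (hprim : ∃ s, EssPos (tpow A s)) :
    ∃ r, r + 1 ≤ 2 ^ n ^ (m + 1) ∧ EssPos (tpow A r) := by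
  obtain ⟨s, hs⟩ := hprim
  rw [essPos_tpow_iff hA] at hs
  refine ⟨2 ^ n - 2, ?_, (essPos_tpow_iff hA _).2 fun S hS => ?_⟩
  · have : 2 ^ n ≤ 2 ^ n ^ (m + 1) :=
      Nat.pow_le_pow_right two_pos (Nat.le_self_pow (Nat.succ_ne_zero m) n)
    have := Nat.one_le_two_pow (n := n)
    omega
  · have huniv : IsFixedPt (supportStep A) Set.univ := Set.eq_univ_of_univ_subset <|
      calc Set.univ = (supportStep A)^[s + 1] Set.univ := (hs _ (hS.mono S.subset_univ)).symm
        _ = supportStep A ((supportStep A)^[s] Set.univ) := iterate_succ_apply' ..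
        _ ⊆ supportStep A Set.univ := supportStep_mono A (Set.subset_univ _)
    refine iterate_eq_of_isFixedPt_of_card_sub_one_le huniv ⟨s + 1, hs S hS⟩ ?_
    rw [Fintype.card_set, Fintype.card_fin]
    omega

/-- a nonnegative primitive tensor of order `m + 1 ≥ 2` and dimension
`n` (i.e. some power `𝔸^{s+1} = tpow A s` is essentially positive) has primitive
degree at most `2^(n^(m+1))`: some power `𝔸^{r+1}` with `r + 1 ≤ 2^(n^(m+1))` is
essentially positive. -/
theorem primitive_degree_bound (n m : ℕ) (hm : 1 ≤ m)
    (A : Tensor ℝ (Fin n) (Fin m)) (hA : ∀ i f, 0 ≤ A i f)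
    (hprim : ∃ s, EssPos (tpow A s)) :
    ∃ r, r + 1 ≤ 2 ^ n ^ (m + 1) ∧ EssPos (tpow A r) :=
  primitive_degree_bound_general n m A hA hprim
end
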